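/- arXiv:1410.2040 — 2 statements merged into one kernel-verified Lean document; each statement's English description precedes it below -/
import Mathlib

section
/- For any divisors m and k of n, the range (column space) of P(gcd(m,k)) equals the intersection of the range of P(m) and the range of P(k); i.e., H(m∧k) = H(m) ∩ H(k). -/
open Matrix BigOperators
open scoped ComplexOrder

/-- The projector `P(m)` onto the position states of subsystem `Σ(m)` embedded in `Σ(n)`:
`P(m) = ∑_{r=0}^{m-1} E_{(n/m)r}` where `E_j` is the diagonal matrix unit at `(j,j)`. -/
noncomputable def projP (n : ℕ) [NeZero n] (m : ℕ) : Matrix (ZMod n) (ZMod n) ℂ :=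
  ∑ r ∈ Finset.range m,
    Matrix.single ((n / m * r : ℕ) : ZMod n) ((n / m * r : ℕ) : ZMod n) (1 : ℂ)

/-- The lower probability `ℓ(m|ρ) = Tr(P(m) ρ)` (a real number). -/
noncomputable def lowerProb (n : ℕ) [NeZero n] (m : ℕ)
    (ρ : Matrix (ZMod n) (ZMod n) ℂ) : ℝ :=
  (Matrix.trace (projP n m * ρ)).re

/-- The negation `¬m = ∏_p p^{v_p(n)}` over primes `p` dividing `n` but not `m`. -/
def negDiv (n m : ℕ) : ℕ :=
  ∏ p ∈ n.primeFactors.filter (fun p => ¬ p ∣ m), p ^ (n.factorization p)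

/-- The upper probability `u(m|ρ) = 1 - ℓ(¬m|ρ) + ℓ(1|ρ)`. -/
noncomputable def upperProb (n : ℕ) [NeZero n] (m : ℕ)
    (ρ : Matrix (ZMod n) (ZMod n) ℂ) : ℝ :=
  1 - lowerProb n (negDiv n m) ρ + lowerProb n 1 ρ


lemma val_aux (n : ℕ) [NeZero n] (m : ℕ) (hm : m ∣ n) {r : ℕ} (hr : r < m) :
    ((((n / m * r : ℕ)) : ZMod n)).val = n / m * r := by
  apply ZMod.val_cast_of_lt
  have hn : 0 < n := Nat.pos_of_ne_zero (NeZero.ne n)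
  have h2 : n / m * m = n := Nat.div_mul_cancel hm
  have hq : 0 < n / m := Nat.div_pos (Nat.le_of_dvd hn hm) (Nat.pos_of_dvd_of_pos hm hn)
  calc n / m * r < n / m * m := (Nat.mul_lt_mul_left hq).mpr hr
    _ = n := h2

lemma projP_eq_diagonal (n : ℕ) [NeZero n] (m : ℕ) (hm : m ∣ n) :
    projP n m = Matrix.diagonal (fun i : ZMod n => if (n / m : ℕ) ∣ i.val then (1:ℂ) else 0) := by
  have hn : 0 < n := Nat.pos_of_ne_zero (NeZero.ne n)
  have hm0 : 0 < m := Nat.pos_of_dvd_of_pos hm hn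
  have hq : 0 < n / m := Nat.div_pos (Nat.le_of_dvd hn hm) hm0
  ext i j
  rw [projP, Matrix.sum_apply]
  by_cases hij : i = j
  · subst hij
    rw [Matrix.diagonal_apply_eq]
    by_cases hdvd : (n / m : ℕ) ∣ i.val
    · obtain ⟨r, hr⟩ := hdvd
      have hrm : r < m := by
        have h2 : n / m * m = n := Nat.div_mul_cancel hm
        have h1 : n / m * r < n / m * m := by rw [h2, ← hr]; exact ZMod.val_lt i
        exact Nat.lt_of_mul_lt_mul_left h1
      have hi : i = ((n / m * r : ℕ) : ZMod n) := by
        have hv : (((n / m * r : ℕ) : ZMod n)).val = i.val := by rw [val_aux n m hm hrm, hr]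
        exact (ZMod.val_injective n hv).symm
      rw [if_pos ⟨r, hr⟩]
      rw [Finset.sum_eq_single_of_mem r (Finset.mem_range.mpr hrm)]
      · rw [hi]; exact Matrix.single_apply_same _ _ _
      · intro b hb hbr
        have hbm := Finset.mem_range.mp hb
        have hne : ((n / m * b : ℕ) : ZMod n) ≠ i := by
          intro h
          apply hbr
          have hv := val_aux n m hm hbm
          have : n / m * b = n / m * r := by rw [← hv, h, hr]
          exact Nat.eq_of_mul_eq_mul_left hq this
        exact Matrix.single_apply_of_ne _ _ _ _ _ (by tauto)
    · rw [if_neg hdvd]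
      apply Finset.sum_eq_zero
      intro r hr
      have hrm := Finset.mem_range.mp hr
      have hne : ((n / m * r : ℕ) : ZMod n) ≠ i := by
        intro h
        exact hdvd ⟨r, by rw [← h, val_aux n m hm hrm]⟩
      exact Matrix.single_apply_of_ne _ _ _ _ _ (by tauto)
  · rw [Matrix.diagonal_apply_ne _ hij]
    apply Finset.sum_eq_zero
    intro r _
    by_cases h : ((n / m * r : ℕ) : ZMod n) = i
    · exact Matrix.single_apply_of_ne _ _ _ _ _ (by intro ⟨h1, h2⟩; exact hij (h1 ▸ h2 ▸ rfl))
    · exact Matrix.single_apply_of_ne _ _ _ _ _ (by tauto)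

lemma mem_range_projP (n : ℕ) [NeZero n] (m : ℕ) (hm : m ∣ n) (x : ZMod n → ℂ) :
    x ∈ LinearMap.range (projP n m).mulVecLin ↔
      ∀ i : ZMod n, ¬ ((n / m : ℕ) ∣ i.val) → x i = 0 := by
  rw [projP_eq_diagonal n m hm]
  constructor
  · rintro ⟨y, rfl⟩ i hi
    simp [Matrix.mulVecLin_apply, Matrix.mulVec_diagonal, hi]
  · intro h
    refine ⟨x, ?_⟩
    funext i
    by_cases hi : (n / m : ℕ) ∣ i.val
    · simp [Matrix.mulVecLin_apply, Matrix.mulVec_diagonal, hi]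
    · simp [Matrix.mulVecLin_apply, Matrix.mulVec_diagonal, hi, h i hi]

lemma div_dvd_iff_aux (n m v : ℕ) (hn : n ≠ 0) (hm : m ∣ n) : n / m ∣ v ↔ n ∣ m * v := by
  obtain ⟨c, hc⟩ := hm
  have hm0 : m ≠ 0 := by rintro rfl; simp at hc; exact hn hc
  subst hc
  rw [Nat.mul_div_cancel_left c (Nat.pos_of_ne_zero hm0)]
  exact (mul_dvd_mul_iff_left hm0).symm

/-- `H(m ∧ k) = H(m) ∩ H(k)`: the range of `P(gcd(m,k))` equals the intersection of the
ranges of `P(m)` and `P(k)`. -/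
theorem range_projP_gcd (n : ℕ) [NeZero n] (m k : ℕ) (hm : m ∣ n) (hk : k ∣ n) :
    LinearMap.range (projP n (Nat.gcd m k)).mulVecLin =
      LinearMap.range (projP n m).mulVecLin ⊓ LinearMap.range (projP n k).mulVecLin := by
  have hn : n ≠ 0 := NeZero.ne n
  have hg : Nat.gcd m k ∣ n := dvd_trans (Nat.gcd_dvd_left m k) hm
  ext x
  rw [Submodule.mem_inf, mem_range_projP n _ hg, mem_range_projP n _ hm, mem_range_projP n _ hk]
  have key : ∀ v : ℕ, ((n / Nat.gcd m k : ℕ) ∣ v) ↔ ((n / m : ℕ) ∣ v ∧ (n / k : ℕ) ∣ v) := by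
    intro v
    rw [div_dvd_iff_aux n _ v hn hg, div_dvd_iff_aux n m v hn hm, div_dvd_iff_aux n k v hn hk,
      ← Nat.gcd_mul_right, Nat.dvd_gcd_iff]
  constructor
  · intro h
    exact ⟨fun i hi => h i (fun hd => hi ((key i.val).mp hd).1),
           fun i hi => h i (fun hd => hi ((key i.val).mp hd).2)⟩
  · rintro ⟨h1, h2⟩ i hi
    rcases not_and_or.mp (fun hc => hi ((key i.val).mpr hc)) with h | h
    · exact h1 i h
    · exact h2 i h
end

section
/- (The lower probability is a capacity on the set of divisors of n.) Let ρ be an n×n positive semidefinite complex matrix with trace 1 (a density matrix). For any nonempty finite sets A ⊆ B of divisors of n, defining ℓ(A|ρ) = ℓ(lcm of the elements of A | ρ), one has ℓ(A|ρ) ≤ ℓ(B|ρ); moreover 0 ≤ ℓ(A|ρ) ≤ 1 and ℓ({n}|ρ) = 1. -/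
open Matrix BigOperators
open scoped ComplexOrder

/-- The index set of `P(m)` as a subset of `ZMod n`. -/
noncomputable def idxSet (n : ℕ) [NeZero n] (m : ℕ) : Finset (ZMod n) :=
  (Finset.range m).image (fun r => ((n / m * r : ℕ) : ZMod n))

lemma idx_injOn (n : ℕ) [NeZero n] {m : ℕ} (hm : m ∣ n) :
    Set.InjOn (fun r : ℕ => ((n / m * r : ℕ) : ZMod n)) (Finset.range m) := by
  have hn : 0 < n := Nat.pos_of_ne_zero (NeZero.ne n)
  have hm0 : 0 < m := Nat.pos_of_dvd_of_pos hm hn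
  have hq : 0 < n / m := Nat.div_pos (Nat.le_of_dvd hn hm) hm0
  intro r hr s hs h
  simp only [Finset.coe_range, Set.mem_Iio] at hr hs
  have hrn : n / m * r < n := by
    calc n / m * r < n / m * m := (Nat.mul_lt_mul_left hq).mpr hr
    _ = n := Nat.div_mul_cancel hm
  have hsn : n / m * s < n := by
    calc n / m * s < n / m * m := (Nat.mul_lt_mul_left hq).mpr hs
    _ = n := Nat.div_mul_cancel hm
  have h' : ((n / m * r : ℕ) : ZMod n).val = ((n / m * s : ℕ) : ZMod n).val :=
    congrArg ZMod.val h
  rw [ZMod.val_cast_of_lt hrn, ZMod.val_cast_of_lt hsn] at h'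
  exact Nat.eq_of_mul_eq_mul_left hq h'

lemma lowerProb_eq_sum (n : ℕ) [NeZero n] {m : ℕ} (hm : m ∣ n)
    (ρ : Matrix (ZMod n) (ZMod n) ℂ) :
    lowerProb n m ρ = ∑ j ∈ idxSet n m, (ρ j j).re := by
  unfold lowerProb projP idxSet
  rw [Finset.sum_mul, Matrix.trace_sum]
  have : ∀ i : ZMod n, Matrix.trace (Matrix.single i i (1:ℂ) * ρ) = ρ i i := by
    intro i
    simp [Matrix.trace, Matrix.mul_apply, Matrix.single, Matrix.diag, ite_and,
      Finset.sum_ite_eq, Finset.sum_ite_eq']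
  simp only [this]
  rw [Finset.sum_image (fun r hr s hs h => idx_injOn n hm (by simpa using hr) (by simpa using hs) h)]
  rw [Complex.re_sum]

lemma idxSet_subset (n : ℕ) [NeZero n] {m m' : ℕ} (h1 : m ∣ m') (h2 : m' ∣ n) :
    idxSet n m ⊆ idxSet n m' := by
  have hn : 0 < n := Nat.pos_of_ne_zero (NeZero.ne n)
  have hm'0 : 0 < m' := Nat.pos_of_dvd_of_pos h2 hn
  have hm0 : 0 < m := Nat.pos_of_dvd_of_pos (h1.trans h2) hn
  obtain ⟨k, hk⟩ := h1
  have hk0 : 0 < k := Nat.pos_of_ne_zero (by rintro rfl; simp at hk; omega)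
  intro j hj
  simp only [idxSet, Finset.mem_image, Finset.mem_range] at hj ⊢
  obtain ⟨r, hr, hrj⟩ := hj
  refine ⟨k * r, ?_, ?_⟩
  · calc k * r < k * m := by exact (Nat.mul_lt_mul_left hk0).mpr hr
    _ = m' := by rw [hk]; ring
  · rw [← hrj]
    congr 1
    have : n / m' * k = n / m := by
      obtain ⟨l, hl⟩ := h2
      subst hk hl
      rw [Nat.mul_div_cancel_left _ (by positivity), Nat.mul_assoc,
        Nat.mul_div_cancel_left _ hm0]
      ring
    rw [← Nat.mul_assoc, this]

lemma diag_re_nonneg (n : ℕ) [NeZero n] {ρ : Matrix (ZMod n) (ZMod n) ℂ}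
    (hρ : ρ.PosSemidef) (i : ZMod n) : 0 ≤ (ρ i i).re := by
  have := hρ.dotProduct_mulVec_nonneg (Pi.single i 1)
  have h : (0:ℂ) ≤ ρ i i := by
    simpa [dotProduct, Matrix.mulVec, Pi.single_apply] using this
  exact (Complex.le_def.mp h).1

/-- The lower probability is a capacity on the set of divisors of `n`: for nonempty finite
sets `A ⊆ B` of divisors of `n`, with `ℓ(A|ρ) = ℓ(lcm A|ρ)`, one has
`ℓ(A|ρ) ≤ ℓ(B|ρ)`, `0 ≤ ℓ(A|ρ) ≤ 1` and `ℓ({n}|ρ) = 1`. -/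
theorem lowerProb_capacity (n : ℕ) [NeZero n] (ρ : Matrix (ZMod n) (ZMod n) ℂ)
    (hρ : ρ.PosSemidef) (htr : ρ.trace = 1) (A B : Finset ℕ) (hA : A.Nonempty)
    (hAB : A ⊆ B) (hB : ∀ m ∈ B, m ∣ n) :
    lowerProb n (A.lcm id) ρ ≤ lowerProb n (B.lcm id) ρ ∧
    0 ≤ lowerProb n (A.lcm id) ρ ∧ lowerProb n (A.lcm id) ρ ≤ 1 ∧
    lowerProb n (({n} : Finset ℕ).lcm id) ρ = 1 := by
  have hbn : B.lcm id ∣ n := Finset.lcm_dvd hB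
  have hab : A.lcm id ∣ B.lcm id := Finset.lcm_dvd (fun a ha => Finset.dvd_lcm (hAB ha))
  have han : A.lcm id ∣ n := hab.trans hbn
  have htr' : ∑ j : ZMod n, (ρ j j).re = 1 := by
    have : (ρ.trace).re = 1 := by rw [htr]; simp
    rw [← this, Matrix.trace, Complex.re_sum]
    rfl
  have hle1 : ∀ {m : ℕ}, m ∣ n → lowerProb n m ρ ≤ 1 := by
    intro m hm
    rw [lowerProb_eq_sum n hm, ← htr']
    exact Finset.sum_le_sum_of_subset_of_nonneg (Finset.subset_univ _)
      (fun j _ _ => diag_re_nonneg n hρ j)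
  refine ⟨?_, ?_, hle1 han, ?_⟩
  · rw [lowerProb_eq_sum n han, lowerProb_eq_sum n hbn]
    exact Finset.sum_le_sum_of_subset_of_nonneg (idxSet_subset n hab hbn)
      (fun j _ _ => diag_re_nonneg n hρ j)
  · rw [lowerProb_eq_sum n han]
    exact Finset.sum_nonneg (fun j _ => diag_re_nonneg n hρ j)
  · have hlcm : ({n} : Finset ℕ).lcm id = n := by
      simp [Finset.lcm_singleton]
    rw [hlcm, lowerProb_eq_sum n dvd_rfl]
    have : idxSet n n = Finset.univ := by
      refine Finset.eq_univ_of_forall (fun j => ?_)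
      simp only [idxSet, Finset.mem_image, Finset.mem_range]
      refine ⟨j.val, ZMod.val_lt j, ?_⟩
      rw [Nat.div_self (Nat.pos_of_ne_zero (NeZero.ne n)), one_mul, ZMod.natCast_val,
        ZMod.cast_id]
    rw [this, htr']
end
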